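/- On Ω_γ the vector field (G₁, G₂) is Hamiltonian with Hamiltonian G: G₁ = ∂G/∂W and G₂ = −∂G/∂θ on Ω_γ; consequently, if (θ, W) : I → Ω_γ is a differentiable solution on an interval I of dθ/dt = G₁(θ,W), dW/dt = G₂(θ,W), then t ↦ G(θ(t), W(t)) is constant on I. -/

import Mathlib

noncomputable section

open Real Set

/-- The inverse hyperbolic tangent, artanh x = (1/2) log((1+x)/(1−x)). -/
def artanh (x : ℝ) : ℝ := 1 / 2 * Real.log ((1 + x) / (1 - x))

/-- θ_γ = artanh(1/√γ), the unique positive solution of cosh θ = √γ sinh θ. -/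
def thetaG (γ : ℝ) : ℝ := _root_.artanh (1 / Real.sqrt γ)

/-- The phase space Ω_γ. -/
def OmegaG (γ : ℝ) : Set (ℝ × ℝ) :=
  {p | 0 < p.1 ∧ p ≠ (thetaG γ, 0)}

/-- Q(θ,W) = (d/γ)(cosh θ − √γ sinh θ)² + W². -/
def Qfun (d γ θ W : ℝ) : ℝ :=
  d / γ * (Real.cosh θ - Real.sqrt γ * Real.sinh θ) ^ 2 + W ^ 2

/-- G₁(θ,W) = −α√γ W / Q(θ,W)^{3/2}. -/
def G1 (α d γ θ W : ℝ) : ℝ :=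
  -(α * Real.sqrt γ * W) / Qfun d γ θ W ^ ((3 : ℝ) / 2)

/-- G₂(θ,W). -/
def G2 (α d γ θ W : ℝ) : ℝ :=
  -(1 / Real.sqrt d) * (γ ^ ((3 : ℝ) / 2) / Real.cosh θ + 1 / Real.sinh θ) +
    α * d * (Real.sinh θ - Real.sqrt γ * Real.cosh θ) *
        (Real.cosh θ - Real.sqrt γ * Real.sinh θ) /
      (Real.sqrt γ * Qfun d γ θ W ^ ((3 : ℝ) / 2))

/-- The Hamiltonian G(θ,W). -/
def GHam (α d γ θ W : ℝ) : ℝ :=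
  1 / Real.sqrt d *
      (2 * γ ^ ((3 : ℝ) / 2) * Real.arctan (Real.tanh (θ / 2)) +
        Real.log (Real.tanh (θ / 2))) +
    α * Real.sqrt γ / Qfun d γ θ W ^ ((1 : ℝ) / 2)


/-! On `Ω_γ` the function `Q` is positive, since `Q = 0` forces `W = 0` and `tanh θ = 1/√γ`,
i.e. `θ = θ_γ`; so `G` is differentiable there. Its `θ`-part differentiates to
`(γ^{3/2}/cosh θ + 1/sinh θ)/√d` because `arctan (tanh (θ/2))` and `log (tanh (θ/2))` have
derivatives `1/(2 cosh θ)` and `1/sinh θ`, and the potential term `α √γ Q^{-1/2}` supplies the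
remaining parts of `G₁` and `-G₂`. Along a solution the chain rule then gives
`dG/dt = (-G₂) G₁ + G₁ G₂ = 0`. -/
open ContinuousLinearMap (fst snd)
open Function (uncurry)

lemma eq_thetaG_of_cosh_eq {γ θ : ℝ} (h : cosh θ - √γ * sinh θ = 0) : θ = thetaG γ := by
  have hcosh : cosh θ ≠ 0 := (cosh_pos θ).ne'
  have hγ : √γ ≠ 0 := by rintro hγ; simp [hγ] at h; exact hcosh h
  have htanh : tanh θ = 1 / √γ := by
    rw [tanh_eq_sinh_div_cosh]
    field_simp
    linarith
  have hmem : tanh θ ∈ Icc (-1) 1 := ⟨(neg_one_lt_tanh θ).le, (tanh_lt_one θ).le⟩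
  rw [thetaG, _root_.artanh, ← htanh, ← Real.artanh_eq_half_log hmem, Real.artanh_tanh]

lemma Qfun_pos {d γ θ W : ℝ} (hd : 0 < d) (hγ : 0 < γ) (hmem : (θ, W) ∈ OmegaG γ) :
    0 < Qfun d γ θ W := by
  by_contra! hQ
  have hu : cosh θ - √γ * sinh θ = 0 := by
    by_contra hu
    have : 0 < d / γ * (cosh θ - √γ * sinh θ) ^ 2 := by positivity
    exact hQ.not_gt (by unfold Qfun; positivity)
  have hW : W = 0 := by
    by_contra hW
    have : 0 < W ^ 2 := by positivity
    exact hQ.not_gt (by unfold Qfun; positivity)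
  exact hmem.2 (by rw [eq_thetaG_of_cosh_eq hu, hW])

lemma Real.hasDerivAt_tanh (x : ℝ) : HasDerivAt tanh (1 / cosh x ^ 2) x := by
  have h := (hasDerivAt_sinh x).div (hasDerivAt_cosh x) (cosh_pos x).ne'
  rw [show tanh = fun x => sinh x / cosh x from funext tanh_eq_sinh_div_cosh]
  refine h.congr_deriv ?_
  rw [← cosh_sq_sub_sinh_sq x]
  ring

lemma hasDerivAt_tanh_half (x : ℝ) :
    HasDerivAt (fun s => tanh (s / 2)) (1 / (2 * cosh (x / 2) ^ 2)) x := by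
  refine ((Real.hasDerivAt_tanh (x / 2)).comp x ((hasDerivAt_id x).div_const 2)).congr_deriv ?_
  field_simp

lemma hasDerivAt_arctan_tanh_half (x : ℝ) :
    HasDerivAt (fun s => arctan (tanh (s / 2))) (1 / (2 * cosh x)) x := by
  refine (hasDerivAt_tanh_half x).arctan.congr_deriv ?_
  have hcosh : cosh x = cosh (x / 2) ^ 2 + sinh (x / 2) ^ 2 := by
    rw [← cosh_two_mul, mul_div_cancel₀ x two_ne_zero]
  rw [hcosh, tanh_eq_sinh_div_cosh]
  field_simp

lemma hasDerivAt_log_tanh_half {x : ℝ} (hx : x ≠ 0) :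
    HasDerivAt (fun s => log (tanh (s / 2))) (1 / sinh x) x := by
  have hsinh : sinh (x / 2) ≠ 0 := sinh_ne_zero.2 (by simpa using hx)
  have hcosh := (cosh_pos (x / 2)).ne'
  have htanh : tanh (x / 2) ≠ 0 := by rw [tanh_eq_sinh_div_cosh]; exact div_ne_zero hsinh hcosh
  refine ((hasDerivAt_tanh_half x).log htanh).congr_deriv ?_
  rw [show x = 2 * (x / 2) by ring, sinh_two_mul, mul_div_cancel_left₀ _ two_ne_zero,
    tanh_eq_sinh_div_cosh]
  field_simp

lemma hasDerivAt_const_div_rpow_half (c : ℝ) {y : ℝ} (hy : 0 < y) :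
    HasDerivAt (fun z => c / z ^ (1 / 2 : ℝ)) (-(c / 2) / y ^ (3 / 2 : ℝ)) y := by
  have h := (hasDerivAt_const y c).div (hasDerivAt_sqrt hy.ne') (sqrt_ne_zero'.2 hy)
  have h32 : y ^ (3 / 2 : ℝ) = y * √y := by
    rw [sqrt_eq_rpow, show (3 / 2 : ℝ) = 1 + 1 / 2 by norm_num, rpow_add hy, rpow_one]
  simp only [← sqrt_eq_rpow]
  refine h.congr_deriv ?_
  rw [h32, sq_sqrt hy.le]
  field_simp
  ring

lemma hasFDerivAt_Qfun (d γ θ W : ℝ) :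
    HasFDerivAt (uncurry (Qfun d γ))
      ((2 * (d / γ) * (cosh θ - √γ * sinh θ) * (sinh θ - √γ * cosh θ)) • fst ℝ ℝ ℝ +
        (2 * W) • snd ℝ ℝ ℝ) (θ, W) := by
  have hu : HasDerivAt (fun s => d / γ * (cosh s - √γ * sinh s) ^ 2)
      (2 * (d / γ) * (cosh θ - √γ * sinh θ) * (sinh θ - √γ * cosh θ)) θ := by
    refine (((hasDerivAt_cosh θ).sub ((hasDerivAt_sinh θ).const_mul √γ)).pow 2).const_mul
      (d / γ) |>.congr_deriv ?_
    simp only [Pi.sub_apply]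
    ring
  have hW : HasDerivAt (fun w => w ^ 2) (2 * W) W := by
    simpa using hasDerivAt_pow 2 W
  exact (hu.comp_hasFDerivAt (f := Prod.fst) (θ, W) hasFDerivAt_fst).add
    (hW.comp_hasFDerivAt (f := Prod.snd) (θ, W) hasFDerivAt_snd)

lemma hasFDerivAt_GHam {α d γ θ W : ℝ} (hd : 0 < d) (hγ : 0 < γ) (hmem : (θ, W) ∈ OmegaG γ) :
    HasFDerivAt (uncurry (GHam α d γ))
      ((-G2 α d γ θ W) • fst ℝ ℝ ℝ + G1 α d γ θ W • snd ℝ ℝ ℝ) (θ, W) := by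
  have hQ := Qfun_pos hd hγ hmem
  have hθpart : HasDerivAt (fun s => 1 / √d *
      (2 * γ ^ (3 / 2 : ℝ) * arctan (tanh (s / 2)) + log (tanh (s / 2))))
      (1 / √d * (γ ^ (3 / 2 : ℝ) / cosh θ + 1 / sinh θ)) θ := by
    refine ((((hasDerivAt_arctan_tanh_half θ).const_mul _).add
      (hasDerivAt_log_tanh_half hmem.1.ne')).const_mul _).congr_deriv ?_
    field_simp
  have hWpart := (hasDerivAt_const_div_rpow_half (α * √γ) hQ).comp_hasFDerivAt (θ, W)
    (hasFDerivAt_Qfun d γ θ W)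
  refine ((hθpart.comp_hasFDerivAt (f := Prod.fst) (θ, W) hasFDerivAt_fst).add
    hWpart).congr_fderiv ?_
  have hdγ : d / γ = d / √γ / √γ := by rw [div_div, mul_self_sqrt hγ.le]
  have hθ : -G2 α d γ θ W = 1 / √d * (γ ^ (3 / 2 : ℝ) / cosh θ + 1 / sinh θ) +
      -(α * √γ / 2) / Qfun d γ θ W ^ (3 / 2 : ℝ) *
        (2 * (d / γ) * (cosh θ - √γ * sinh θ) * (sinh θ - √γ * cosh θ)) := by
    rw [G2, hdγ]
    field_simp
    ring
  have hW : G1 α d γ θ W = -(α * √γ / 2) / Qfun d γ θ W ^ (3 / 2 : ℝ) * (2 * W) := by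
    rw [G1]
    field_simp
  rw [hθ, hW]
  module

lemma HasFDerivAt.hasDerivAt_partial_fst_snd {H : ℝ → ℝ → ℝ} {a b θ W : ℝ}
    (h : HasFDerivAt (uncurry H) (a • fst ℝ ℝ ℝ + b • snd ℝ ℝ ℝ) (θ, W)) :
    HasDerivAt (fun s => H s W) a θ ∧ HasDerivAt (fun w => H θ w) b W := by
  have hθ := h.comp_hasDerivAt θ ((hasDerivAt_id θ).prodMk (hasDerivAt_const θ W))
  have hW := h.comp_hasDerivAt W ((hasDerivAt_const W θ).prodMk (hasDerivAt_id W))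
  simp only [id_eq, add_apply, smul_apply, ContinuousLinearMap.coe_fst', smul_eq_mul, mul_one,
    ContinuousLinearMap.coe_snd', mul_zero, add_zero, zero_add] at hθ hW
  exact ⟨hθ, hW⟩

lemma hasDerivWithinAt_hamiltonian_along_flow {H : ℝ → ℝ → ℝ} {X Y : ℝ} {x y : ℝ → ℝ}
    {I : Set ℝ} {t : ℝ}
    (hH : HasFDerivAt (uncurry H) ((-Y) • fst ℝ ℝ ℝ + X • snd ℝ ℝ ℝ) (x t, y t))
    (hx : HasDerivWithinAt x X I t) (hy : HasDerivWithinAt y Y I t) :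
    HasDerivWithinAt (fun t => H (x t) (y t)) 0 I t := by
  have h := hH.comp_hasDerivWithinAt t (hx.prodMk hy)
  simp only [add_apply, smul_apply, ContinuousLinearMap.coe_fst', smul_eq_mul, mul_comm, mul_neg,
    ContinuousLinearMap.coe_snd', neg_add_cancel] at h
  exact h

lemma eq_of_hasDerivWithinAt_zero {f : ℝ → ℝ} {I : Set ℝ} (hI : I.OrdConnected)
    (hf : ∀ t ∈ I, HasDerivWithinAt f 0 I t) {s t : ℝ} (hs : s ∈ I) (ht : t ∈ I) :
    f s = f t := by
  simpa [sub_eq_zero] using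
    hI.convex.norm_image_sub_le_of_norm_hasDerivWithin_le hf (C := 0) (by simp) ht hs

theorem hamiltonian_structure_opposite_sign_general
    (α d γ : ℝ) (hd : 0 < d) (hγ : 1 < γ) :
    (∀ θ W : ℝ, (θ, W) ∈ OmegaG γ →
      HasDerivAt (fun w => GHam α d γ θ w) (G1 α d γ θ W) W ∧
      HasDerivAt (fun s => GHam α d γ s W) (-G2 α d γ θ W) θ) ∧
    (∀ (I : Set ℝ), I.OrdConnected → ∀ θ W : ℝ → ℝ,
      (∀ t ∈ I, (θ t, W t) ∈ OmegaG γ) →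
      (∀ t ∈ I, HasDerivWithinAt θ (G1 α d γ (θ t) (W t)) I t) →
      (∀ t ∈ I, HasDerivWithinAt W (G2 α d γ (θ t) (W t)) I t) →
      ∀ s ∈ I, ∀ t ∈ I, GHam α d γ (θ s) (W s) = GHam α d γ (θ t) (W t)) := by
  have hγ₀ : 0 < γ := zero_lt_one.trans hγ
  refine ⟨fun θ W hmem => ?_, fun I hI θ W hmem hθ hW => ?_⟩
  · exact (hasFDerivAt_GHam hd hγ₀ hmem).hasDerivAt_partial_fst_snd.symm
  · exact fun s hs t ht => eq_of_hasDerivWithinAt_zero hI (fun t ht =>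
      hasDerivWithinAt_hamiltonian_along_flow (hasFDerivAt_GHam hd hγ₀ (hmem t ht))
        (hθ t ht) (hW t ht)) hs ht

/-- The vector field (G₁, G₂) is Hamiltonian on Ω_γ with Hamiltonian G
(G₁ = ∂G/∂W, G₂ = −∂G/∂θ), and consequently G is conserved along any
differentiable solution on an interval I. -/
theorem hamiltonian_structure_opposite_sign
    (α d γ : ℝ) (hα : 0 < α) (hd : 0 < d) (hγ : 1 < γ) :
    (∀ θ W : ℝ, (θ, W) ∈ OmegaG γ →
      HasDerivAt (fun w => GHam α d γ θ w) (G1 α d γ θ W) W ∧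
      HasDerivAt (fun s => GHam α d γ s W) (-G2 α d γ θ W) θ) ∧
    (∀ (I : Set ℝ), I.OrdConnected → ∀ θ W : ℝ → ℝ,
      (∀ t ∈ I, (θ t, W t) ∈ OmegaG γ) →
      (∀ t ∈ I, HasDerivWithinAt θ (G1 α d γ (θ t) (W t)) I t) →
      (∀ t ∈ I, HasDerivWithinAt W (G2 α d γ (θ t) (W t)) I t) →
      ∀ s ∈ I, ∀ t ∈ I, GHam α d γ (θ s) (W s) = GHam α d γ (θ t) (W t)) :=
  hamiltonian_structure_opposite_sign_general α d γ hd hγ
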